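/- arXiv:math/0210437 — 3 statements merged into one kernel-verified Lean document; each statement's English description precedes it below -/
import Mathlib

section
/- Let n ≥ 2 and let Γ be a group (under composition) of bijections of the closed unit ball B̄ in ℝⁿ, each mapping the open unit ball B into B and the unit sphere into the unit sphere, such that every γ ∈ Γ with γ ≠ id agrees on B̄ with A ∘ i, where A is a linear isometry of ℝⁿ and i is the inversion in a sphere S(c,r) (c ∈ ℝⁿ, r > 0) satisfying ‖c‖² = 1 + r² (i.e., S(c,r) is orthogonal to the unit sphere). Assume that the orbit Γ·0 = {γ(0) : γ ∈ Γ} has no accumulation point in the open ball B, and that a is a point of the unit sphere for which there exists an open neighborhood V of a in ℝⁿ with (V ∩ B̄) ∩ γ(V ∩ B̄) = ∅ for all γ ≠ id. Then there exists ε > 0 such that for all x, y ∈ B with ‖x − a‖ < ε and ‖y − a‖ < ε, the infimum over γ ∈ Γ of Real.arcosh(1 + 2‖x − γ(y)‖²/((1 − ‖x‖²)(1 − ‖γ(y)‖²))) equals Real.arcosh(1 + 2‖x − y‖²/((1 − ‖x‖²)(1 − ‖y‖²))); in particular, for every γ ∈ Γ one has ‖x − γ(y)‖²/((1 − ‖x‖²)(1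 − ‖γ(y)‖²)) ≥ ‖x − y‖²/((1 − ‖x‖²)(1 − ‖y‖²)). -/
/-- The inversion in the sphere `S(c, r)` in `ℝⁿ`: `i(x) = c + (r/‖x−c‖)² (x − c)`. -/
noncomputable def sphereInversion {n : ℕ} (c : EuclideanSpace ℝ (Fin n)) (r : ℝ)
    (x : EuclideanSpace ℝ (Fin n)) : EuclideanSpace ℝ (Fin n) :=
  c + (r / ‖x - c‖) ^ 2 • (x - c)

/-- The inverse hyperbolic cosine, `arcosh x = log (x + √(x² − 1))`. -/
noncomputable def arcosh (x : ℝ) : ℝ := Real.log (x + Real.sqrt (x ^ 2 - 1))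

open RealInnerProductSpace

lemma arcosh_nonneg' {u : ℝ} (hu : 1 ≤ u) : 0 ≤ arcosh u :=
  Real.log_nonneg (by nlinarith [Real.sqrt_nonneg (u^2-1)])

lemma arcosh_mono' {u v : ℝ} (hu : 1 ≤ u) (huv : u ≤ v) : arcosh u ≤ arcosh v := by
  unfold arcosh
  have h1 : 0 < u + Real.sqrt (u^2-1) := by nlinarith [Real.sqrt_nonneg (u^2-1)]
  exact Real.log_le_log h1 (add_le_add huv (Real.sqrt_le_sqrt (by nlinarith)))

lemma hlp_possq {t : ℝ} (h : t < 1) (h0 : 0 ≤ t) : 0 < 1 - t^2 := by nlinarith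

lemma hlp_one_lt {w r : ℝ} (h : w^2 = 1+r^2) (hw : 0 ≤ w) (hr : 0 < r) : 1 < w := by
  nlinarith

lemma hlp_le_one {w s : ℝ} (h : w^2 * s = 1) (hs : 1 ≤ s) (hw : 0 ≤ w) : w ≤ 1 := by
  nlinarith

lemma hlp_cz {v r s : ℝ} (h : v^2 * s = r^4) (hs : 1 ≤ s) (hsr : s = 1 + r^2)
    (hv : 0 ≤ v) (hr : 0 < r) : v ≤ r := by
  by_contra hlt
  push_neg at hlt
  have h2 : r^2 < v^2 := by nlinarith
  have h3 : r^2*(1+r^2) < v^2*(1+r^2) := by nlinarith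
  rw [hsr] at h
  nlinarith

lemma hlp_ca {η r nz nc ncz w : ℝ} (hη : 0 < η) (hη1 : η ≤ 1) (hr : 0 < r)
    (hz : η ≤ nz) (htri : nz ≤ ncz + nc) (hcz : ncz ≤ r)
    (hw : w^2 = 1 + r^2) (hw0 : 0 ≤ w) (htri2 : w - 1 ≤ nc) :
    η^2/16 ≤ nc := by
  rcases le_or_gt r (η/2) with hcase | hcase
  · nlinarith
  · have hη2 : η^2 ≤ 1 := by nlinarith
    have h4 : η^4 ≤ η^2 := by nlinarith [mul_le_mul_of_nonneg_right hη2 (sq_nonneg η)]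
    have hclow : 1 + η^2/16 ≤ w := by
      by_contra hlt
      push_neg at hlt
      have h5 : w^2 < (1+η^2/16)^2 := by nlinarith
      have h6 : η^2/4 < r^2 := by nlinarith
      nlinarith
    linarith

lemma hlp_core {δ η₀ ε r nxy nxy' nyc w : ℝ}
    (hδ : 0 < δ) (hδ1 : δ ≤ 1) (hη₀ : 0 < η₀) (hε : 0 < ε)
    (hεδ : ε ≤ δ/12) (hεη : ε ≤ η₀*δ/8) (hεη₀ : ε ≤ η₀/8)
    (hr : 0 < r)
    (hxy0 : 0 ≤ nxy) (hxy2 : nxy ≤ 2*ε)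
    (hxy' : δ/2 ≤ nxy')
    (hycb : η₀ - ε ≤ nyc) (hyc0 : 0 ≤ nyc)
    (hw : w^2 = 1 + r^2) (hw0 : 0 ≤ w)
    (hwyc : w - 1 ≤ nyc) :
    nxy^2 * r^2 ≤ nxy'^2 * nyc^2 := by
  have h1 : nxy^2 ≤ (2*ε)^2 := pow_le_pow_left₀ hxy0 hxy2 2
  have h2 : (δ/2)^2 ≤ nxy'^2 := pow_le_pow_left₀ (by positivity) hxy' 2
  rcases le_or_gt r 1 with hcase | hcase
  · have h3 : (η₀ - ε)^2 ≤ nyc^2 := pow_le_pow_left₀ (by linarith) hycb 2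
    have hδε : δ*ε ≤ ε := mul_le_of_le_one_left hε.le hδ1
    have hA : 2*ε ≤ (δ/2)*(η₀ - ε) := by nlinarith
    calc nxy^2 * r^2 ≤ (2*ε)^2 * 1 :=
          mul_le_mul h1 (by nlinarith) (sq_nonneg r) (by positivity)
      _ ≤ ((δ/2)*(η₀-ε))^2 := by
          rw [mul_one]
          exact pow_le_pow_left₀ (by positivity) hA 2
      _ = (δ/2)^2*(η₀-ε)^2 := by ring
      _ ≤ nxy'^2 * nyc^2 := mul_le_mul h2 h3 (sq_nonneg _) (sq_nonneg _)
  · have hclow : 1 + r/3 ≤ w := by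
      by_contra hlt
      push_neg at hlt
      have h5 : w^2 < (1+r/3)^2 := by nlinarith
      nlinarith
    have hyc3 : r/3 ≤ nyc := by linarith
    have h3 : (r/3)^2 ≤ nyc^2 := pow_le_pow_left₀ (by positivity) hyc3 2
    calc nxy^2 * r^2 ≤ (2*ε)^2 * r^2 := mul_le_mul_of_nonneg_right h1 (sq_nonneg r)
      _ ≤ (δ/6)^2 * r^2 :=
          mul_le_mul_of_nonneg_right (pow_le_pow_left₀ (by positivity) (by linarith) 2)
            (sq_nonneg r)
      _ = (δ/2)^2 * (r/3)^2 := by ring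
      _ ≤ nxy'^2 * nyc^2 := mul_le_mul h2 h3 (sq_nonneg _) (sq_nonneg _)

lemma hlp_main2 {nxy nxy' nyc r ty ty' : ℝ}
    (hyc : 0 < nyc) (hdepth : ty' * nyc^2 = r^2 * ty) (hty : 0 ≤ ty)
    (hcore : nxy^2 * r^2 ≤ nxy'^2 * nyc^2) :
    nxy^2 * ty' ≤ nxy'^2 * ty := by
  have hyc2 : 0 < nyc^2 := by positivity
  have hdx : nxy^2*(ty'*nyc^2) = nxy^2*(r^2*ty) := by rw [hdepth]
  have hcy : nxy^2*r^2*ty ≤ nxy'^2*nyc^2*ty := mul_le_mul_of_nonneg_right hcore hty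
  nlinarith [hdx, hcy, hyc2]

lemma hlp_final {nxy nxy' tx ty ty' : ℝ} (htx : 0 < tx) (hty : 0 < ty) (hty' : 0 < ty')
    (h : nxy^2 * ty' ≤ nxy'^2 * ty) :
    nxy^2 / (tx*ty) ≤ nxy'^2 / (tx*ty') := by
  rw [div_le_div_iff₀ (by positivity) (by positivity)]
  nlinarith [mul_le_mul_of_nonneg_left h htx.le]

lemma depth_identity {n : ℕ} (c u : EuclideanSpace ℝ (Fin n)) (r : ℝ)
    (hc : ‖c‖^2 = 1 + r^2) (huc : u ≠ c) :
    (1 - ‖sphereInversion c r u‖^2) * ‖u - c‖^2 = r^2 * (1 - ‖u‖^2) := by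
  have hucn : ‖u - c‖ ≠ 0 := norm_ne_zero_iff.mpr (sub_ne_zero.mpr huc)
  have hS : ‖u - c‖^2 = ‖u‖^2 - 2*⟪u,c⟫ + ‖c‖^2 := norm_sub_sq_real u c
  have hic : ⟪c, u - c⟫ = ⟪u,c⟫ - ‖c‖^2 := by
    rw [inner_sub_right, real_inner_comm, real_inner_self_eq_norm_sq]
  have hmain : ‖sphereInversion c r u‖^2
      = ‖c‖^2 + 2*((r/‖u-c‖)^2 * ⟪c, u-c⟫) + ((r/‖u-c‖)^2)^2*‖u-c‖^2 := by
    unfold sphereInversion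
    rw [norm_add_sq_real, real_inner_smul_right, norm_smul, mul_pow,
      Real.norm_eq_abs, sq_abs]
  have hk : (r/‖u-c‖)^2 = r^2/‖u-c‖^2 := div_pow r _ 2
  rw [hmain, hic, hc, hk]
  set ip := ⟪u,c⟫ with hip
  set N := ‖u‖^2 with hN
  set S := ‖u-c‖^2 with hSdef
  have hSne : S ≠ 0 := pow_ne_zero 2 hucn
  have hS2 : S = N - 2*ip + (1 + r^2) := by rw [hS, hc]
  rw [hS2] at hSne ⊢
  field_simp
  ring

lemma inversion_center {n : ℕ} (c : EuclideanSpace ℝ (Fin n)) (r : ℝ)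
    (hr : 0 < r) (hc : ‖c‖^2 = 1 + r^2) :
    sphereInversion c r (((1:ℝ) + r^2)⁻¹ • c) = 0 := by
  have h1r : (0:ℝ) < 1 + r^2 := by positivity
  have hdiff : ((1:ℝ) + r^2)⁻¹ • c - c = (((1:ℝ)+r^2)⁻¹ - 1) • c := by
    rw [sub_smul, one_smul]
  have hn2 : ‖((1:ℝ) + r^2)⁻¹ • c - c‖^2 = r^4/(1+r^2) := by
    rw [hdiff, norm_smul, mul_pow, Real.norm_eq_abs, sq_abs, hc]
    field_simp
    ring
  have hnne : ‖((1:ℝ) + r^2)⁻¹ • c - c‖ ≠ 0 := by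
    intro h
    rw [h] at hn2
    have : r^4/(1+r^2) > 0 := by positivity
    rw [← hn2] at this
    norm_num at this
  have hk : (r / ‖((1:ℝ) + r^2)⁻¹ • c - c‖)^2 = (1+r^2)/r^2 := by
    rw [div_pow, hn2]
    field_simp
  unfold sphereInversion
  rw [hk, hdiff, smul_smul]
  have : (1 + r ^ 2) / r ^ 2 * ((1 + r ^ 2)⁻¹ - 1) = -1 := by
    field_simp
    ring
  rw [this, neg_one_smul, add_neg_cancel]

/-- The main theorem: near a point `a` of the domain of discontinuity, the projection
to the quotient of the Poincaré ball is an isometry. -/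
theorem local_isometry_near_domain_of_discontinuity {n : ℕ} (hn : 2 ≤ n)
    (Γ : Subgroup (Equiv.Perm {x : EuclideanSpace ℝ (Fin n) // ‖x‖ ≤ 1}))
    -- each element of Γ maps the open ball into the open ball and the sphere into the sphere
    (hmap : ∀ γ ∈ Γ, ∀ x : {x : EuclideanSpace ℝ (Fin n) // ‖x‖ ≤ 1},
      (‖x.val‖ < 1 → ‖(γ x).val‖ < 1) ∧ (‖x.val‖ = 1 → ‖(γ x).val‖ = 1))
    -- each nonidentity element agrees on the closed ball with A ∘ i, with A a linear
    -- isometry and i the inversion in a sphere orthogonal to the unit sphere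
    (hmob : ∀ γ ∈ Γ, γ ≠ 1 →
      ∃ (A : EuclideanSpace ℝ (Fin n) ≃ₗᵢ[ℝ] EuclideanSpace ℝ (Fin n))
        (c : EuclideanSpace ℝ (Fin n)) (r : ℝ),
        0 < r ∧ ‖c‖ ^ 2 = 1 + r ^ 2 ∧
        ∀ x : {x : EuclideanSpace ℝ (Fin n) // ‖x‖ ≤ 1},
          (γ x).val = A (sphereInversion c r x.val))
    -- the orbit of the origin has no accumulation point in the open ball
    (hacc : ∀ x : EuclideanSpace ℝ (Fin n), ‖x‖ < 1 →
      ¬ AccPt x (Filter.principal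
        {y : EuclideanSpace ℝ (Fin n) | ∃ γ ∈ Γ, y = (γ ⟨0, by norm_num⟩).val}))
    -- a is a point of the unit sphere with a neighborhood V such that
    -- (V ∩ B̄) ∩ γ(V ∩ B̄) = ∅ for all γ ≠ 1
    (a : EuclideanSpace ℝ (Fin n)) (ha : ‖a‖ = 1)
    (V : Set (EuclideanSpace ℝ (Fin n))) (hVopen : IsOpen V) (haV : a ∈ V)
    (hdisj : ∀ γ ∈ Γ, γ ≠ 1 →
      (V ∩ {x : EuclideanSpace ℝ (Fin n) | ‖x‖ ≤ 1}) ∩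
        {y : EuclideanSpace ℝ (Fin n) |
          ∃ x : {x : EuclideanSpace ℝ (Fin n) // ‖x‖ ≤ 1}, x.val ∈ V ∧ y = (γ x).val}
        = ∅) :
    ∃ ε > 0, ∀ x y : EuclideanSpace ℝ (Fin n), ∀ hx : ‖x‖ < 1, ∀ hy : ‖y‖ < 1,
      ‖x - a‖ < ε → ‖y - a‖ < ε →
      (⨅ γ : Γ, arcosh (1 + 2 * ‖x - (γ.val ⟨y, hy.le⟩).val‖ ^ 2 /
          ((1 - ‖x‖ ^ 2) * (1 - ‖(γ.val ⟨y, hy.le⟩).val‖ ^ 2)))) =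
        arcosh (1 + 2 * ‖x - y‖ ^ 2 / ((1 - ‖x‖ ^ 2) * (1 - ‖y‖ ^ 2))) ∧
      ∀ γ ∈ Γ, ‖x - y‖ ^ 2 / ((1 - ‖x‖ ^ 2) * (1 - ‖y‖ ^ 2)) ≤
        ‖x - (γ ⟨y, hy.le⟩).val‖ ^ 2 /
          ((1 - ‖x‖ ^ 2) * (1 - ‖(γ ⟨y, hy.le⟩).val‖ ^ 2)) := by
  classical
  obtain ⟨δ', hδ'pos, hδ'sub⟩ := Metric.isOpen_iff.mp hVopen a haV
  set δ : ℝ := min δ' 1 with hδdef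
  have hδpos : 0 < δ := lt_min hδ'pos one_pos
  have hδ1 : δ ≤ 1 := min_le_right _ _
  have hδsub : Metric.ball a δ ⊆ V :=
    subset_trans (Metric.ball_subset_ball (min_le_left _ _)) hδ'sub
  have h0le : ‖(0 : EuclideanSpace ℝ (Fin n))‖ ≤ 1 := by norm_num
  set x0 : {x : EuclideanSpace ℝ (Fin n) // ‖x‖ ≤ 1} := ⟨0, h0le⟩ with hx0
  have h0lt : ‖(x0 : {x : EuclideanSpace ℝ (Fin n) // ‖x‖ ≤ 1}).val‖ < 1 := by
    rw [hx0]
    simpa using one_pos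
  -- Step 2: orbit of 0 stays away from a
  have step2 : ∃ η > 0, ∀ g ∈ Γ, η ≤ ‖(g x0).val - a‖ := by
    by_contra hcon
    push_neg at hcon
    obtain ⟨γ₁, hγ₁Γ, hγ₁⟩ := hcon δ hδpos
    set p₁ := (γ₁ x0).val with hp₁def
    have hp₁lt : ‖p₁‖ < 1 := (hmap γ₁ hγ₁Γ x0).1 h0lt
    have hp₁a : 0 < ‖p₁ - a‖ := by
      rw [norm_pos_iff, sub_ne_zero]
      intro h
      rw [h, ha] at hp₁lt
      exact lt_irrefl 1 hp₁lt
    obtain ⟨γ₂, hγ₂Γ, hγ₂⟩ := hcon (min ‖p₁ - a‖ δ) (lt_min hp₁a hδpos)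
    set p₂ := (γ₂ x0).val with hp₂def
    have hp₂p₁ : p₂ ≠ p₁ := by
      intro h
      rw [h] at hγ₂
      exact absurd (lt_of_lt_of_le hγ₂ (min_le_left _ _)) (lt_irrefl _)
    have hne : γ₂ * γ₁⁻¹ ≠ 1 := by
      intro h
      exact hp₂p₁ (by rw [hp₂def, hp₁def, mul_inv_eq_one.mp h])
    have hp₁V : p₁ ∈ V := hδsub (by rw [Metric.mem_ball, dist_eq_norm]; exact hγ₁)
    have hp₂V : p₂ ∈ V := hδsub (by
      rw [Metric.mem_ball, dist_eq_norm]
      exact lt_of_lt_of_le hγ₂ (min_le_right _ _))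
    have happ : ((γ₂ * γ₁⁻¹ : Equiv.Perm _) (γ₁ x0)) = γ₂ x0 := by
      simp [Equiv.Perm.mul_apply]
    have hd := hdisj (γ₂ * γ₁⁻¹) (Γ.mul_mem hγ₂Γ (Γ.inv_mem hγ₁Γ)) hne
    rw [Set.eq_empty_iff_forall_notMem] at hd
    exact hd p₂ ⟨⟨hp₂V, (γ₂ x0).2⟩, ⟨γ₁ x0, hp₁V, by rw [happ]⟩⟩
  obtain ⟨η', hη'pos, hη'⟩ := step2
  set η : ℝ := min η' 1 with hηdef
  have hηpos : 0 < η := lt_min hη'pos one_pos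
  have hη1 : η ≤ 1 := min_le_right _ _
  have hηb : ∀ g ∈ Γ, η ≤ ‖(g x0).val - a‖ :=
    fun g hg => le_trans (min_le_left _ _) (hη' g hg)
  set η₀ : ℝ := η^2/16 with hη₀def
  have hη₀pos : 0 < η₀ := by positivity
  set ε : ℝ := min (δ/12) (η₀*δ/8) with hεdef
  have hεpos : 0 < ε := lt_min (by positivity) (by positivity)
  have hεδ : ε ≤ δ/12 := min_le_left _ _
  have hεη : ε ≤ η₀*δ/8 := min_le_right _ _
  have hεη₀ : ε ≤ η₀/8 := by
    have h := mul_le_of_le_one_right hη₀pos.le hδ1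
    have := hεη
    linarith
  refine ⟨ε, hεpos, ?_⟩
  intro x y hx hy hxa hya
  have h1x : 0 < 1 - ‖x‖^2 := hlp_possq hx (norm_nonneg x)
  have h1y : 0 < 1 - ‖y‖^2 := hlp_possq hy (norm_nonneg y)
  have hyV : y ∈ V := hδsub (by
    rw [Metric.mem_ball, dist_eq_norm]
    linarith)
  have hxy2 : ‖x - y‖ ≤ 2*ε := by
    have h := norm_sub_le (x - a) (y - a)
    rw [sub_sub_sub_cancel_right] at h
    linarith
  -- the key comparison
  have key : ∀ γ ∈ Γ, ‖x - y‖ ^ 2 / ((1 - ‖x‖ ^ 2) * (1 - ‖y‖ ^ 2)) ≤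
      ‖x - (γ ⟨y, hy.le⟩).val‖ ^ 2 /
        ((1 - ‖x‖ ^ 2) * (1 - ‖(γ ⟨y, hy.le⟩).val‖ ^ 2)) := by
    intro γ hγΓ
    by_cases hγ1 : γ = 1
    · subst hγ1
      simp
    · obtain ⟨A, c, r, hr, hc, hform⟩ := hmob γ hγΓ hγ1
      set y' := (γ ⟨y, hy.le⟩).val with hy'def
      have hy'lt : ‖y'‖ < 1 := (hmap γ hγΓ ⟨y, hy.le⟩).1 hy
      have h1y' : 0 < 1 - ‖y'‖^2 := hlp_possq hy'lt (norm_nonneg y')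
      have hclarge : 1 < ‖c‖ := hlp_one_lt hc (norm_nonneg c) hr
      have hwyc : ‖c‖ - 1 ≤ ‖y - c‖ := by
        have h := norm_sub_norm_le c y
        rw [norm_sub_rev] at h
        linarith
      have hyc0 : 0 < ‖y - c‖ := by linarith
      have hycne : y ≠ c := by
        intro h
        rw [h, sub_self, norm_zero] at hyc0
        exact lt_irrefl 0 hyc0
      have hdepth : (1 - ‖y'‖^2) * ‖y - c‖^2 = r^2*(1-‖y‖^2) := by
        rw [hy'def, hform ⟨y, hy.le⟩, A.norm_map]
        exact depth_identity c y r hc hycne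
      have hy'V : y' ∉ V := by
        intro hmem
        have hd := hdisj γ hγΓ hγ1
        rw [Set.eq_empty_iff_forall_notMem] at hd
        exact hd y' ⟨⟨hmem, hy'lt.le⟩, ⟨⟨y, hy.le⟩, hyV, rfl⟩⟩
      have hy'a : δ ≤ ‖y' - a‖ := by
        by_contra hlt
        push_neg at hlt
        exact hy'V (hδsub (by rw [Metric.mem_ball, dist_eq_norm]; exact hlt))
      have hxy' : δ/2 ≤ ‖x - y'‖ := by
        have h := norm_add_le (y' - x) (x - a)
        rw [sub_add_sub_cancel] at h
        rw [norm_sub_rev y' x] at h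
        linarith
      -- lower bound on ‖c - a‖
      have h1r : (0:ℝ) < 1 + r^2 := by positivity
      have h1rge : (1:ℝ) ≤ 1 + r^2 := le_add_of_nonneg_right (sq_nonneg r)
      set z₀ : EuclideanSpace ℝ (Fin n) := ((1:ℝ)+r^2)⁻¹ • c with hz₀def
      have hz₀n2 : ‖z₀‖^2 * (1+r^2) = 1 := by
        rw [hz₀def, norm_smul, mul_pow, Real.norm_eq_abs, sq_abs, hc]
        field_simp
      have hz₀le : ‖z₀‖ ≤ 1 := hlp_le_one hz₀n2 h1rge (norm_nonneg z₀)
      have hγz₀ : γ ⟨z₀, hz₀le⟩ = x0 := by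
        apply Subtype.ext
        rw [hform ⟨z₀, hz₀le⟩]
        show A (sphereInversion c r z₀) = (0 : EuclideanSpace ℝ (Fin n))
        rw [hz₀def, inversion_center c r hr hc, map_zero]
      have hz₀orb : ((γ⁻¹ : Equiv.Perm _) x0).val = z₀ := by
        rw [← hγz₀, Equiv.Perm.coe_inv, Equiv.symm_apply_apply]
      have hz₀a : η ≤ ‖z₀ - a‖ := by
        rw [← hz₀orb]
        exact hηb γ⁻¹ (Γ.inv_mem hγΓ)
      have hrepr : c - z₀ = (r^2/(1+r^2)) • c := by
        rw [hz₀def]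
        nth_rewrite 1 [← one_smul ℝ c]
        rw [← sub_smul]
        congr 1
        field_simp
        ring
      have hcz2 : ‖c - z₀‖^2 * (1+r^2) = r^4 := by
        rw [hrepr, norm_smul, mul_pow, Real.norm_eq_abs, sq_abs, hc]
        field_simp
      have hcz : ‖c - z₀‖ ≤ r := hlp_cz hcz2 h1rge rfl (norm_nonneg _) hr
      have htri : ‖z₀ - a‖ ≤ ‖c - z₀‖ + ‖c - a‖ := by
        have h := norm_add_le (z₀ - c) (c - a)
        rw [sub_add_sub_cancel] at h
        rw [norm_sub_rev z₀ c] at h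
        exact h
      have htri2 : ‖c‖ - 1 ≤ ‖c - a‖ := by
        have h := norm_sub_norm_le c a
        rw [ha] at h
        exact h
      have hca : η₀ ≤ ‖c - a‖ :=
        hlp_ca hηpos hη1 hr hz₀a htri hcz hc (norm_nonneg c) htri2
      have hycb : η₀ - ε ≤ ‖y - c‖ := by
        have h := norm_add_le (c - y) (y - a)
        rw [sub_add_sub_cancel] at h
        rw [norm_sub_rev c y] at h
        linarith
      have hcore : ‖x - y‖^2 * r^2 ≤ ‖x - y'‖^2 * ‖y - c‖^2 := by
        have hwyc2 : ‖c‖ - 1 ≤ ‖y - c‖ := hwyc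
        exact hlp_core hδpos hδ1 hη₀pos hεpos hεδ hεη hεη₀ hr
          (norm_nonneg _) hxy2 hxy' hycb (norm_nonneg _) hc (norm_nonneg c) hwyc2
      have hmain2 : ‖x - y‖^2*(1-‖y'‖^2) ≤ ‖x - y'‖^2*(1-‖y‖^2) :=
        hlp_main2 hyc0 hdepth h1y.le hcore
      exact hlp_final h1x h1y h1y' hmain2
  refine ⟨?_, key⟩
  haveI : Nonempty Γ := ⟨1⟩
  have hterm1 : ∀ γ : Γ, (0:ℝ) < 1 - ‖(γ.val ⟨y, hy.le⟩).val‖^2 := by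
    intro γ
    exact hlp_possq ((hmap γ.val γ.2 ⟨y, hy.le⟩).1 hy) (norm_nonneg _)
  have hge1 : ∀ γ : Γ, (1:ℝ) ≤ 1 + 2 * ‖x - (γ.val ⟨y, hy.le⟩).val‖ ^ 2 /
      ((1 - ‖x‖ ^ 2) * (1 - ‖(γ.val ⟨y, hy.le⟩).val‖ ^ 2)) := by
    intro γ
    have h := div_nonneg (by positivity : (0:ℝ) ≤ 2 * ‖x - (γ.val ⟨y, hy.le⟩).val‖ ^ 2)
      (mul_pos h1x (hterm1 γ)).le
    linarith
  have hbdd : BddBelow (Set.range fun γ : Γ => arcosh (1 + 2 * ‖x - (γ.val ⟨y, hy.le⟩).val‖ ^ 2 /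
      ((1 - ‖x‖ ^ 2) * (1 - ‖(γ.val ⟨y, hy.le⟩).val‖ ^ 2)))) := by
    refine ⟨0, ?_⟩
    rintro z ⟨γ, rfl⟩
    exact arcosh_nonneg' (hge1 γ)
  have hone : (((1 : Γ) : Equiv.Perm {x : EuclideanSpace ℝ (Fin n) // ‖x‖ ≤ 1}) ⟨y, hy.le⟩).val = y := by
    simp
  apply le_antisymm
  · refine le_trans (ciInf_le hbdd (1 : Γ)) (le_of_eq ?_)
    rw [hone]
  · apply le_ciInf
    intro γ
    have hk := key γ.val γ.2
    have h1 : (1:ℝ) ≤ 1 + 2 * ‖x - y‖ ^ 2 / ((1 - ‖x‖ ^ 2) * (1 - ‖y‖ ^ 2)) := by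
      have h := div_nonneg (by positivity : (0:ℝ) ≤ 2 * ‖x - y‖ ^ 2)
        (mul_pos h1x h1y).le
      linarith
    apply arcosh_mono' h1
    rw [mul_div_assoc, mul_div_assoc]
    linarith
end

section
/- Let n ≥ 2 and let (γ_j)_{j ∈ J} be a family of maps ℝⁿ ∖ {c_j} → ℝⁿ where each γ_j = A_j ∘ i_j with A_j a linear isometry of ℝⁿ and i_j the inversion in a sphere S(c_j, r_j) with r_j > 0 and ‖c_j‖² = 1 + r_j² (the sphere is orthogonal to the unit sphere). Suppose the map j ↦ γ_j(0) is injective and that the set {γ_j(0) : j ∈ J} has no accumulation point in the open unit ball {x : ‖x‖ < 1}. Then the family of radii (r_j) is bounded: sup_j r_j < ∞. -/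
/-!
An inversion in a sphere `S(c, r)` orthogonal to the unit sphere sends the origin to a point of
squared norm `1 / (1 + r²)`, and a linear isometry does not change that norm. Hence large radii
correspond to orbit points close to the origin. Since `j ↦ γⱼ(0)` is injective, infinitely many
large radii would give infinitely many orbit points in the compact ball `‖x‖ ≤ 1/2`, and these
would accumulate inside the unit ball.
-/

open Set Metric Filter

theorem Function.Injective.finite_preimage_of_isCompact_of_not_accPt {X J : Type*}
    [TopologicalSpace X] {f : J → X} (hf : Function.Injective f) {K : Set X} (hK : IsCompact K)
    (hacc : ∀ x ∈ K, ¬ AccPt x (𝓟 (range f))) : (f ⁻¹' K).Finite := by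
  by_contra! hinf
  have himage : (f '' (f ⁻¹' K)).Infinite := hinf.image hf.injOn
  obtain ⟨x, hxK, hx⟩ := himage.exists_accPt_of_subset_isCompact hK (image_preimage_subset f K)
  exact hacc x hxK (hx.mono (principal_mono.2 (image_subset_range f _)))

section sphereInversion

variable {n : ℕ} {c : EuclideanSpace ℝ (Fin n)} {r : ℝ}

theorem sphereInversion_zero : sphereInversion c r 0 = (1 - r ^ 2 / ‖c‖ ^ 2) • c := by
  rw [sphereInversion, zero_sub, norm_neg, smul_neg, sub_smul, one_smul, div_pow]
  abel

theorem norm_sq_sphereInversion_zero (horth : ‖c‖ ^ 2 = 1 + r ^ 2) :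
    ‖sphereInversion c r 0‖ ^ 2 = (1 + r ^ 2)⁻¹ := by
  have hpos : (0 : ℝ) < 1 + r ^ 2 := by positivity
  rw [sphereInversion_zero, norm_smul, mul_pow, Real.norm_eq_abs, sq_abs, horth]
  field_simp
  ring

theorem radius_lt_two_of_half_lt_norm_sphereInversion_zero (horth : ‖c‖ ^ 2 = 1 + r ^ 2)
    (hnorm : 1 / 2 < ‖sphereInversion c r 0‖) : r < 2 := by
  have hsq : (1 / 2 : ℝ) ^ 2 < (1 + r ^ 2)⁻¹ := by
    rw [← norm_sq_sphereInversion_zero horth]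
    gcongr
  have hpos : (0 : ℝ) < 1 + r ^ 2 := by positivity
  rw [lt_inv_comm₀ (by norm_num) hpos] at hsq
  nlinarith

end sphereInversion

theorem radii_bounded_of_orbit_no_accumulation_general {n : ℕ} {J : Type*}
    (A : J → (EuclideanSpace ℝ (Fin n) ≃ₗᵢ[ℝ] EuclideanSpace ℝ (Fin n)))
    (c : J → EuclideanSpace ℝ (Fin n)) (r : J → ℝ)
    (horth : ∀ j, ‖c j‖ ^ 2 = 1 + r j ^ 2)
    (hinj : Function.Injective fun j => A j (sphereInversion (c j) (r j) 0))
    (hacc : ∀ x : EuclideanSpace ℝ (Fin n), ‖x‖ < 1 →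
      ¬ AccPt x (Filter.principal
        (Set.range fun j => A j (sphereInversion (c j) (r j) 0)))) :
    BddAbove (Set.range r) := by
  set g := fun j => A j (sphereInversion (c j) (r j) 0)
  have hfin : (g ⁻¹' closedBall 0 (1 / 2)).Finite :=
    hinj.finite_preimage_of_isCompact_of_not_accPt (isCompact_closedBall 0 _) fun x hx =>
      hacc x (by rw [mem_closedBall, dist_zero_right] at hx; linarith)
  refine ((hfin.image r).bddAbove.union (bddAbove_Iio (a := 2))).mono ?_
  rintro _ ⟨j, rfl⟩
  by_cases hj : g j ∈ closedBall 0 (1 / 2)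
  · exact Or.inl ⟨j, hj, rfl⟩
  · refine Or.inr (radius_lt_two_of_half_lt_norm_sphereInversion_zero (horth j) ?_)
    simpa [g] using hj

theorem radii_bounded_of_orbit_no_accumulation {n : ℕ} (hn : 2 ≤ n) {J : Type*}
    (A : J → (EuclideanSpace ℝ (Fin n) ≃ₗᵢ[ℝ] EuclideanSpace ℝ (Fin n)))
    (c : J → EuclideanSpace ℝ (Fin n)) (r : J → ℝ)
    (hr : ∀ j, 0 < r j)
    (horth : ∀ j, ‖c j‖ ^ 2 = 1 + r j ^ 2)
    (hinj : Function.Injective fun j => A j (sphereInversion (c j) (r j) 0))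
    (hacc : ∀ x : EuclideanSpace ℝ (Fin n), ‖x‖ < 1 →
      ¬ AccPt x (Filter.principal
        (Set.range fun j => A j (sphereInversion (c j) (r j) 0)))) :
    BddAbove (Set.range r) :=
  radii_bounded_of_orbit_no_accumulation_general A c r horth hinj hacc
end

section
/- Let n ≥ 2 and let a be a point of the unit sphere of ℝⁿ. Let (γ_j)_{j ∈ J} be a family of maps where each γ_j = A_j ∘ i_j with A_j a linear isometry of ℝⁿ and i_j the inversion in a sphere S(c_j, r_j) with r_j > 0 and ‖c_j‖² = 1 + r_j². Assume: (i) sup_j r_j < ∞; and (ii) there is an open neighborhood W of a in ℝⁿ such that no point of W lying on the unit sphere is an accumulation point of the set {c_j/‖c_j‖² : j ∈ J}. Then there exist ε > 0 and a constant C ≥ 1 such that for every x with ‖x‖ < 1 and ‖x − a‖ < ε, every b with ‖b‖ = 1 and ‖b − a‖ < ε, and every j ∈ J, one has ‖γ_j(x) − γ_j(b)‖ ≤ C · ‖x − b‖. -/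
lemma sphereInversion_dist {n : ℕ} (c : EuclideanSpace ℝ (Fin n)) (r : ℝ)
    (x y : EuclideanSpace ℝ (Fin n)) (hx : x ≠ c) (hy : y ≠ c) :
    ‖sphereInversion c r x - sphereInversion c r y‖ =
      r ^ 2 * ‖x - y‖ / (‖x - c‖ * ‖y - c‖) := by
  have hu : ‖x - c‖ ≠ 0 := by simpa [sub_eq_zero] using hx
  have hv : ‖y - c‖ ≠ 0 := by simpa [sub_eq_zero] using hy
  have hrhs : 0 ≤ r ^ 2 * ‖x - y‖ / (‖x - c‖ * ‖y - c‖) := by positivity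
  rw [← Real.sqrt_sq (norm_nonneg _), ← Real.sqrt_sq hrhs]
  congr 1
  have key : sphereInversion c r x - sphereInversion c r y =
      (r / ‖x - c‖) ^ 2 • (x - c) - (r / ‖y - c‖) ^ 2 • (y - c) := by
    simp [sphereInversion]
  rw [key]
  have hxy : x - y = (x - c) - (y - c) := by abel
  rw [hxy]
  conv_rhs => rw [div_pow, mul_pow, @norm_sub_sq_real (EuclideanSpace ℝ (Fin n)) _ _]
  rw [@norm_sub_sq_real (EuclideanSpace ℝ (Fin n)) _ _, real_inner_smul_left,
    real_inner_smul_right, norm_smul, norm_smul]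
  simp only [Real.norm_eq_abs, mul_pow, sq_abs]
  field_simp
  ring

theorem uniform_lipschitz_near_discontinuity_point {n : ℕ} (hn : 2 ≤ n)
    (a : EuclideanSpace ℝ (Fin n)) (ha : ‖a‖ = 1) {J : Type*}
    (A : J → (EuclideanSpace ℝ (Fin n) ≃ₗᵢ[ℝ] EuclideanSpace ℝ (Fin n)))
    (c : J → EuclideanSpace ℝ (Fin n)) (r : J → ℝ)
    (hr : ∀ j, 0 < r j)
    (horth : ∀ j, ‖c j‖ ^ 2 = 1 + r j ^ 2)
    (hbdd : BddAbove (Set.range r))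
    (W : Set (EuclideanSpace ℝ (Fin n))) (hWopen : IsOpen W) (haW : a ∈ W)
    (hacc : ∀ x ∈ W, ‖x‖ = 1 →
      ¬ AccPt x (Filter.principal (Set.range fun j => (‖c j‖ ^ 2)⁻¹ • c j))) :
    ∃ ε > 0, ∃ C : ℝ, 1 ≤ C ∧
      ∀ x : EuclideanSpace ℝ (Fin n), ‖x‖ < 1 → ‖x - a‖ < ε →
      ∀ b : EuclideanSpace ℝ (Fin n), ‖b‖ = 1 → ‖b - a‖ < ε →
      ∀ j : J,
        ‖A j (sphereInversion (c j) (r j) x) - A j (sphereInversion (c j) (r j) b)‖ ≤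
          C * ‖x - b‖ := by
  -- ‖c j‖ > 1
  have hc1 : ∀ j, 1 < ‖c j‖ := by
    intro j
    nlinarith [horth j, hr j, norm_nonneg (c j)]
  -- the inverted points are never equal to `a`
  have hne : ∀ j, (‖c j‖ ^ 2)⁻¹ • c j ≠ a := by
    intro j h
    have hc0 : (0:ℝ) < ‖c j‖ := lt_trans one_pos (hc1 j)
    have hnorm : ‖(‖c j‖ ^ 2)⁻¹ • c j‖ = ‖c j‖⁻¹ := by
      rw [norm_smul, Real.norm_eq_abs, abs_of_nonneg (by positivity)]
      field_simp
    rw [h, ha] at hnorm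
    have h2 : ‖c j‖⁻¹ < 1 := by
      rw [inv_lt_one_iff₀]; right; exact hc1 j
    rw [← hnorm] at h2
    exact lt_irrefl _ h2
  -- no accumulation at a gives a ball avoiding the inverted points
  have hnacc := hacc a haW ha
  rw [accPt_iff_nhds] at hnacc
  push_neg at hnacc
  obtain ⟨U, hU, hUa⟩ := hnacc
  obtain ⟨ε₀, hε₀, hball⟩ := Metric.mem_nhds_iff.mp hU
  have havoid : ∀ j, ε₀ ≤ ‖(‖c j‖ ^ 2)⁻¹ • c j - a‖ := by
    intro j
    by_contra h
    push_neg at h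
    have hmem : (‖c j‖ ^ 2)⁻¹ • c j ∈ Metric.ball a ε₀ := by
      rw [Metric.mem_ball, dist_eq_norm]; exact h
    exact hne j (hUa _ ⟨hball hmem, ⟨j, rfl⟩⟩)
  -- choose ε
  set ε : ℝ := min (ε₀ / 11) 1 with hε
  have hεpos : 0 < ε := lt_min (by linarith) one_pos
  have hε1 : ε ≤ 1 := min_le_right _ _
  have hε11 : ε ≤ ε₀ / 11 := min_le_left _ _
  -- uniform lower bound on distances to the centers
  have hlow : ∀ x : EuclideanSpace ℝ (Fin n), ‖x‖ ≤ 1 → ‖x - a‖ < ε →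
      ∀ j, ε ≤ ‖x - c j‖ := by
    intro x hx hxa j
    by_contra h
    push_neg at h
    have hc0 : (0:ℝ) < ‖c j‖ := lt_trans one_pos (hc1 j)
    have hca : ‖c j - a‖ < 2 * ε := by
      calc ‖c j - a‖ = ‖(c j - x) + (x - a)‖ := by rw [sub_add_sub_cancel]
        _ ≤ ‖c j - x‖ + ‖x - a‖ := norm_add_le _ _
        _ = ‖x - c j‖ + ‖x - a‖ := by rw [norm_sub_rev]
        _ < ε + ε := by linarith
        _ = 2 * ε := by ring
    have hcnorm : ‖c j‖ < 1 + 2 * ε := by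
      calc ‖c j‖ = ‖(c j - a) + a‖ := by rw [sub_add_cancel]
        _ ≤ ‖c j - a‖ + ‖a‖ := norm_add_le _ _
        _ < 2 * ε + 1 := by rw [ha]; linarith
        _ = 1 + 2 * ε := by ring
    have hrj : r j ^ 2 < 4 * ε + 4 * ε ^ 2 := by nlinarith [horth j, norm_nonneg (c j)]
    have hshift : ‖(‖c j‖ ^ 2)⁻¹ • c j - c j‖ = r j ^ 2 / ‖c j‖ := by
      have : (‖c j‖ ^ 2)⁻¹ • c j - c j = ((‖c j‖ ^ 2)⁻¹ - 1) • c j := by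
        rw [sub_smul, one_smul]
      rw [this, norm_smul, Real.norm_eq_abs, abs_of_nonpos, neg_sub]
      · have h2 : ‖c j‖ ^ 2 ≠ 0 := by positivity
        field_simp
        nlinarith [horth j]
      · have : 1 ≤ ‖c j‖ ^ 2 := by nlinarith [hr j, horth j]
        have h2 : (0:ℝ) < ‖c j‖ ^ 2 := by positivity
        rw [sub_nonpos]
        rw [inv_le_one_iff₀]; right; exact this
    have hshift' : ‖(‖c j‖ ^ 2)⁻¹ • c j - c j‖ ≤ r j ^ 2 := by
      rw [hshift]
      rw [div_le_iff₀ hc0]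
      nlinarith [hr j, hc1 j]
    have hfinal : ‖(‖c j‖ ^ 2)⁻¹ • c j - a‖ < ε₀ := by
      calc ‖(‖c j‖ ^ 2)⁻¹ • c j - a‖
          = ‖((‖c j‖ ^ 2)⁻¹ • c j - c j) + (c j - a)‖ := by rw [sub_add_sub_cancel]
        _ ≤ ‖(‖c j‖ ^ 2)⁻¹ • c j - c j‖ + ‖c j - a‖ := norm_add_le _ _
        _ < r j ^ 2 + 2 * ε := by linarith
        _ < (4 * ε + 4 * ε ^ 2) + 2 * ε := by linarith
        _ ≤ 10 * ε := by nlinarith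
        _ ≤ 10 * (ε₀ / 11) := by linarith
        _ < ε₀ := by linarith
    exact absurd hfinal (not_lt.mpr (havoid j))
  -- bound on the radii
  obtain ⟨R, hR⟩ := hbdd
  have hRj : ∀ j, r j ≤ R := fun j => hR ⟨j, rfl⟩
  refine ⟨ε, hεpos, max 1 (R ^ 2 / ε ^ 2), le_max_left _ _, ?_⟩
  intro x hx hxa b hb hba j
  have hxc : ε ≤ ‖x - c j‖ := hlow x hx.le hxa j
  have hbc : ε ≤ ‖b - c j‖ := hlow b hb.le hba j
  have hxne : x ≠ c j := by
    intro h; rw [h, sub_self, norm_zero] at hxc; linarith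
  have hbne : b ≠ c j := by
    intro h; rw [h, sub_self, norm_zero] at hbc; linarith
  rw [← map_sub, (A j).norm_map, sphereInversion_dist _ _ _ _ hxne hbne]
  have hdiv : r j ^ 2 / (‖x - c j‖ * ‖b - c j‖) ≤ R ^ 2 / ε ^ 2 := by
    apply div_le_div₀ (by positivity) (by nlinarith [hr j, hRj j]) (by positivity)
    calc ε ^ 2 = ε * ε := sq ε
      _ ≤ ‖x - c j‖ * ‖b - c j‖ := by
          apply mul_le_mul hxc hbc hεpos.le (norm_nonneg _)
  calc r j ^ 2 * ‖x - b‖ / (‖x - c j‖ * ‖b - c j‖)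
      = (r j ^ 2 / (‖x - c j‖ * ‖b - c j‖)) * ‖x - b‖ := by ring
    _ ≤ (R ^ 2 / ε ^ 2) * ‖x - b‖ := by
        apply mul_le_mul_of_nonneg_right hdiv (norm_nonneg _)
    _ ≤ max 1 (R ^ 2 / ε ^ 2) * ‖x - b‖ := by
        apply mul_le_mul_of_nonneg_right (le_max_right _ _) (norm_nonneg _)
end
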